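/- arXiv:2006.00321 — 5 statements merged into one kernel-verified Lean document; each statement's English description precedes it below -/
import Mathlib

section
/- For every integer n ≥ 4, the identity 1 - C(n,2) = Σ_{i=3}^{n} [C(n,i)(2^{i-1} - 1) - (3^{i-1} - 2^{i-1})] holds. -/
theorem stmt_1 (n : ℕ) (hn : 4 ≤ n) :
    (1 : ℝ) - (n.choose 2 : ℝ) =
      ∑ i ∈ Finset.Icc 3 n,
        ((n.choose i : ℝ) * (2 ^ (i - 1) - 1) - (3 ^ (i - 1) - 2 ^ (i - 1))) := by
  have hIcc : Finset.Icc 3 n = Finset.Ico 3 (n + 1) := by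
    rw [Finset.Ico_add_one_right_eq_Icc]
  have key : ∀ i ∈ Finset.Ico 3 (n + 1),
      ((n.choose i : ℝ) * (2 ^ (i - 1) - 1) - (3 ^ (i - 1) - 2 ^ (i - 1)))
      = ((n.choose i : ℝ) * 2 ^ i / 2 - (n.choose i : ℝ)) - (3:ℝ) ^ i / 3
        + (2:ℝ) ^ i / 2 := by
    intro i hi
    simp only [Finset.mem_Ico] at hi
    obtain ⟨j, rfl⟩ : ∃ j, i = j + 1 := ⟨i - 1, by omega⟩
    simp only [Nat.add_sub_cancel, pow_succ]
    ring
  rw [hIcc, Finset.sum_congr rfl key]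
  have hsplit : ∀ f : ℕ → ℝ,
      ∑ i ∈ Finset.Ico 3 (n + 1), f i
        = ∑ i ∈ Finset.range (n + 1), f i - ∑ i ∈ Finset.range 3, f i := by
    intro f
    rw [Finset.sum_Ico_eq_sub _ (by omega : 3 ≤ n + 1)]
  rw [hsplit]
  have hA : ∑ i ∈ Finset.range (n + 1), (n.choose i : ℝ) * 2 ^ i = 3 ^ n := by
    have h := add_pow (2:ℝ) 1 n
    simp only [one_pow, mul_one] at h
    norm_num at h
    rw [h]
    exact Finset.sum_congr rfl (fun i _ => by ring)
  have hB : ∑ i ∈ Finset.range (n + 1), (n.choose i : ℝ) = 2 ^ n := by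
    have := Nat.sum_range_choose n
    have h2 : ((∑ i ∈ Finset.range (n + 1), n.choose i : ℕ) : ℝ) = ((2 ^ n : ℕ) : ℝ) := by
      rw [this]
    push_cast at h2
    exact h2
  have hC : ∑ i ∈ Finset.range (n + 1), (3:ℝ) ^ i = (3 ^ (n + 1) - 1) / 2 := by
    rw [geom_sum_eq (by norm_num : (3:ℝ) ≠ 1)]
    norm_num
  have hD : ∑ i ∈ Finset.range (n + 1), (2:ℝ) ^ i = 2 ^ (n + 1) - 1 := by
    rw [geom_sum_eq (by norm_num : (2:ℝ) ≠ 1)]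
    norm_num
  have hE : ∑ i ∈ Finset.range (n + 1),
      (((n.choose i : ℝ) * 2 ^ i / 2 - (n.choose i : ℝ)) - (3:ℝ) ^ i / 3
        + (2:ℝ) ^ i / 2)
      = (∑ i ∈ Finset.range (n + 1), (n.choose i : ℝ) * 2 ^ i) / 2
        - (∑ i ∈ Finset.range (n + 1), (n.choose i : ℝ))
        - (∑ i ∈ Finset.range (n + 1), (3:ℝ) ^ i) / 3
        + (∑ i ∈ Finset.range (n + 1), (2:ℝ) ^ i) / 2 := by
    rw [Finset.sum_add_distrib, Finset.sum_sub_distrib, Finset.sum_sub_distrib,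
      ← Finset.sum_div, ← Finset.sum_div, ← Finset.sum_div]
  rw [hE, hA, hB, hC, hD]
  have hr3 : ∑ i ∈ Finset.range 3,
      (((n.choose i : ℝ) * 2 ^ i / 2 - (n.choose i : ℝ)) - (3:ℝ) ^ i / 3
        + (2:ℝ) ^ i / 2)
      = (n : ℝ) + (n.choose 2 : ℝ) - 13 / 3 + 7 / 2
        - (1 / 2 + (n : ℝ) + 2 * (n.choose 2 : ℝ)) + (n.choose 2 : ℝ) * 2 := by
    simp [Finset.sum_range_succ, Nat.choose_one_right]
    ring
  rw [hr3, pow_succ, pow_succ]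
  ring
end

section
/- Let (a_k) be a sequence of real numbers with a_0 = 1 satisfying, for every k ≥ 1, Σ_{j=0}^{k} (1/2^{k-j} - 3/3^{k-j} + 3/(2^j · 3^{k-j})) · a_j · a_{k-j} = 0. Then a_k = 0 for all k ≥ 2. -/
theorem stmt_4 (a : ℕ → ℝ) (h0 : a 0 = 1)
    (h : ∀ k : ℕ, 1 ≤ k →
      ∑ j ∈ Finset.range (k + 1),
        (1 / 2 ^ (k - j) - 3 / 3 ^ (k - j) + 3 / (2 ^ j * 3 ^ (k - j)) : ℝ)
          * a j * a (k - j) = 0) :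
    ∀ k : ℕ, 2 ≤ k → a k = 0 := by
  intro k hk
  induction k using Nat.strong_induction_on with
  | _ k IH =>
  have hs := h k (by omega)
  have hmid : ∀ j, 0 < j → j < k →
      (1 / 2 ^ (k - j) - 3 / 3 ^ (k - j) + 3 / (2 ^ j * 3 ^ (k - j)) : ℝ)
        * a j * a (k - j) = 0 := by
    intro j hj1 hj2
    rcases Nat.lt_or_ge j 2 with hj | hj
    · -- j = 1
      have hj' : j = 1 := by omega
      subst hj'
      rcases Nat.lt_or_ge k 3 with hk3 | hk3
      · have : k = 2 := by omega
        subst this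
        norm_num
      · have : a (k - 1) = 0 := IH (k - 1) (by omega) (by omega)
        rw [this, mul_zero]
    · have : a j = 0 := IH j hj2 hj
      rw [this, mul_zero, zero_mul]
  rw [Finset.sum_range_succ] at hs
  rw [Finset.sum_eq_single_of_mem 0 (Finset.mem_range.mpr (by omega))
    (fun j hj hne => hmid j (Nat.pos_of_ne_zero hne) (Finset.mem_range.mp hj))] at hs
  simp only [Nat.sub_zero, Nat.sub_self, pow_zero, h0, mul_one, one_mul] at hs
  have h2 : (0:ℝ) < 2 ^ k := by positivity
  have h3 : (0:ℝ) < 3 ^ k := by positivity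
  have h4 : (4:ℝ) ≤ 2 ^ k := by
    calc (4:ℝ) = 2 ^ 2 := by norm_num
    _ ≤ 2 ^ k := by gcongr <;> norm_num
  field_simp at hs
  have key : ((4:ℝ) - 2 * 2 ^ k) * (2 ^ k * (3 ^ k * 3 ^ k)) * a k = 0 := by
    linear_combination ((2:ℝ) ^ k * 3 ^ k) * hs
  have hne : ((4:ℝ) - 2 * 2 ^ k) * (2 ^ k * (3 ^ k * 3 ^ k)) ≠ 0 := by
    apply mul_ne_zero
    · nlinarith
    · positivity
  exact (mul_eq_zero.mp key).resolve_left hne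
end

section
/- Let (c_k) be a real sequence with c_0 = 0 satisfying, for every k ≥ 0, Σ_{i=0}^{k} Σ_{j=0}^{i} c_j · c_{i-j} · (k+1-i) · c_{k+1-i} + c_k · (1 - 2^{k+1} + 3^k) = 0. If c_1 = δ, then c_k = (-1)^{k-1} δ^{2k-1}/k! for all k ≥ 1. -/
open Finset

noncomputable def Gf (δ : ℝ) : ℕ → ℝ :=
  fun k => if k = 0 then 0 else δ * (-δ ^ 2) ^ (k - 1) / (Nat.factorial k)

lemma Gf_zero (δ : ℝ) : Gf δ 0 = 0 := rfl

lemma Gf_succ (δ : ℝ) (m : ℕ) :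
    Gf δ (m + 1) = δ * (-δ ^ 2) ^ m / (Nat.factorial (m + 1)) := by
  simp [Gf]

lemma innerG (δ : ℝ) (m : ℕ) :
    ∑ j ∈ range (m + 3), Gf δ j * Gf δ (m + 2 - j)
      = -(-δ ^ 2) ^ (m + 1) * ((2 ^ (m + 2) - 2) / Nat.factorial (m + 2)) := by
  have hch : ∑ j ∈ range (m + 1), (((m + 2).choose (j + 1) : ℝ)) = 2 ^ (m + 2) - 2 := by
    have h2 : ∑ j ∈ range (m + 3), (((m + 2).choose j : ℝ)) = 2 ^ (m + 2) := by
      exact_mod_cast congrArg (Nat.cast : ℕ → ℝ) (Nat.sum_range_choose (m + 2))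
    rw [Finset.sum_range_succ'] at h2
    rw [Finset.sum_range_succ] at h2
    simp only [Nat.choose_self, Nat.choose_zero_right, Nat.cast_one] at h2
    linarith
  rw [Finset.sum_range_succ']
  rw [Finset.sum_range_succ]
  simp only [Nat.sub_self, Gf_zero, mul_zero, zero_mul, add_zero, Nat.sub_zero]
  have hterm : ∀ j ∈ range (m + 1),
      Gf δ (j + 1) * Gf δ (m + 2 - (j + 1))
        = (-(-δ ^ 2) ^ (m + 1)) * (((m + 2).choose (j + 1) : ℝ) / Nat.factorial (m + 2)) := by
    intro j hj
    have hjm : j ≤ m := by simpa [Nat.lt_succ_iff] using hj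
    rw [show m + 2 - (j + 1) = (m - j) + 1 by omega, Gf_succ, Gf_succ]
    have e1 : (-δ ^ 2) ^ j * (-δ ^ 2) ^ (m - j) = (-δ ^ 2) ^ m := by
      rw [← pow_add]; congr 1; omega
    have key : δ * (-δ ^ 2) ^ j * (δ * (-δ ^ 2) ^ (m - j)) = -(-δ ^ 2) ^ (m + 1) := by
      have h' : δ * (-δ ^ 2) ^ j * (δ * (-δ ^ 2) ^ (m - j))
          = δ ^ 2 * ((-δ ^ 2) ^ j * (-δ ^ 2) ^ (m - j)) := by ring
      rw [h', e1, pow_succ]; ring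
    rw [div_mul_div_comm, key, Nat.cast_choose ℝ (by omega : j + 1 ≤ m + 2),
      show m + 2 - (j + 1) = (m - j) + 1 by omega]
    have f1 : ((j + 1).factorial : ℝ) ≠ 0 := by
      exact_mod_cast Nat.factorial_ne_zero _
    have f2 : (((m - j) + 1).factorial : ℝ) ≠ 0 := by
      exact_mod_cast Nat.factorial_ne_zero _
    have f3 : ((m + 2).factorial : ℝ) ≠ 0 := by
      exact_mod_cast Nat.factorial_ne_zero _
    field_simp
  rw [Finset.sum_congr rfl hterm, ← Finset.mul_sum, ← Finset.sum_div, hch]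

lemma sumG (δ : ℝ) (n : ℕ) :
    ∑ i ∈ range (n + 3), ∑ j ∈ range (i + 1),
        Gf δ j * Gf δ (i - j) * ((n + 3 - i : ℕ) : ℝ) * Gf δ (n + 3 - i)
      = -(Gf δ (n + 2)) * (1 - 2 ^ (n + 3) + 3 ^ (n + 2)) := by
  -- binomial sum
  have hbin : ∑ i ∈ range (n + 1), (((n + 2).choose (i + 2) : ℝ)) * (2 ^ (i + 2) - 2)
      = 3 ^ (n + 2) - 2 ^ (n + 3) + 1 := by
    have h3 : ∑ i ∈ range (n + 3), (((n + 2).choose i : ℝ)) * 2 ^ i = 3 ^ (n + 2) := by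
      have haux := add_pow (2 : ℝ) 1 (n + 2)
      simp only [one_pow, mul_one, show n + 2 + 1 = n + 3 by omega,
        show ((2 : ℝ) + 1) = 3 by norm_num] at haux
      rw [haux]
      exact Finset.sum_congr rfl (fun i _ => by ring)
    have h2 : ∑ i ∈ range (n + 3), (((n + 2).choose i : ℝ)) = 2 ^ (n + 2) := by
      exact_mod_cast congrArg (Nat.cast : ℕ → ℝ) (Nat.sum_range_choose (n + 2))
    have htot : ∑ i ∈ range (n + 3), (((n + 2).choose i : ℝ)) * (2 ^ i - 2)
        = 3 ^ (n + 2) - 2 ^ (n + 3) := by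
      have : ∑ i ∈ range (n + 3), (((n + 2).choose i : ℝ)) * (2 ^ i - 2)
          = (∑ i ∈ range (n + 3), (((n + 2).choose i : ℝ)) * 2 ^ i)
            - 2 * ∑ i ∈ range (n + 3), (((n + 2).choose i : ℝ)) := by
        rw [Finset.mul_sum, ← Finset.sum_sub_distrib]
        exact Finset.sum_congr rfl (fun i _ => by ring)
      rw [this, h3, h2]; ring
    rw [Finset.sum_range_succ'] at htot
    rw [Finset.sum_range_succ'] at htot
    simp only [Nat.choose_zero_right, Nat.choose_one_right, Nat.cast_one] at htot
    norm_num at htot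
    linarith [htot]
  -- peel i = 0 and i = 1
  rw [Finset.sum_range_succ']
  rw [Finset.sum_range_succ']
  have hz0 : ∑ j ∈ range (0 + 1), Gf δ j * Gf δ (0 - j) * ((n + 3 - 0 : ℕ) : ℝ) * Gf δ (n + 3 - 0) = 0 := by
    simp [Gf_zero]
  have hz1 : ∑ j ∈ range (0 + 1 + 1), Gf δ j * Gf δ (0 + 1 - j) * ((n + 3 - (0 + 1) : ℕ) : ℝ) * Gf δ (n + 3 - (0 + 1)) = 0 := by
    rw [Finset.sum_range_succ, Finset.sum_range_succ, Finset.sum_range_zero]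
    simp [Gf_zero]
  rw [hz0, hz1, add_zero, add_zero]
  have hterm : ∀ i ∈ range (n + 1),
      ∑ j ∈ range (i + 1 + 1 + 1), Gf δ j * Gf δ (i + 1 + 1 - j) *
          ((n + 3 - (i + 1 + 1) : ℕ) : ℝ) * Gf δ (n + 3 - (i + 1 + 1))
        = (-(δ * (-δ ^ 2) ^ (n + 1)) / Nat.factorial (n + 2)) *
            ((((n + 2).choose (i + 2) : ℝ)) * (2 ^ (i + 2) - 2)) := by
    intro i hi
    have hin : i ≤ n := by simpa [Nat.lt_succ_iff] using hi
    have hsub : n + 3 - (i + 1 + 1) = (n - i) + 1 := by omega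
    have hfactored : ∑ j ∈ range (i + 1 + 1 + 1), Gf δ j * Gf δ (i + 1 + 1 - j) *
          ((n + 3 - (i + 1 + 1) : ℕ) : ℝ) * Gf δ (n + 3 - (i + 1 + 1))
        = (∑ j ∈ range (i + 3), Gf δ j * Gf δ (i + 2 - j)) *
            ((n + 3 - (i + 1 + 1) : ℕ) : ℝ) * Gf δ (n + 3 - (i + 1 + 1)) := by
      rw [Finset.sum_mul, Finset.sum_mul]
    rw [hfactored, innerG δ i, hsub, Gf_succ]
    have hfac : ((((n - i) + 1).factorial : ℝ)) = ((n - i) + 1 : ℕ) * ((n - i).factorial : ℝ) := by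
      rw [Nat.factorial_succ]; push_cast; ring
    have epow : (-δ ^ 2) ^ (i + 1) * (-δ ^ 2) ^ (n - i) = (-δ ^ 2) ^ (n + 1) := by
      rw [← pow_add]; congr 1; omega
    rw [Nat.cast_choose ℝ (by omega : i + 2 ≤ n + 2), show n + 2 - (i + 2) = n - i by omega,
      ← epow, hfac]
    have f1 : ((i + 2).factorial : ℝ) ≠ 0 := by exact_mod_cast Nat.factorial_ne_zero _
    have f2 : ((n - i).factorial : ℝ) ≠ 0 := by exact_mod_cast Nat.factorial_ne_zero _
    have f3 : ((n + 2).factorial : ℝ) ≠ 0 := by exact_mod_cast Nat.factorial_ne_zero _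
    have f4 : (((n - i) + 1 : ℕ) : ℝ) ≠ 0 := Nat.cast_ne_zero.mpr (by omega)
    have gen : ∀ (P Q t a F1 F2 F3 : ℝ), a ≠ 0 → F1 ≠ 0 → F2 ≠ 0 → F3 ≠ 0 →
        -P * (t / F1) * a * (δ * Q / (a * F2)) = -(δ * (P * Q)) / F3 * (F3 / (F1 * F2) * t) := by
      intro P Q t a F1 F2 F3 ha hF1 hF2 hF3
      field_simp
    exact gen _ _ _ _ _ _ _ f4 f1 f2 f3
  rw [Finset.sum_congr rfl hterm, ← Finset.mul_sum, hbin, Gf_succ]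
  ring

lemma coef_pos (n : ℕ) : (0 : ℝ) < 1 - 2 ^ (n + 3) + 3 ^ (n + 2) := by
  have hnat : 2 ^ (n + 3) ≤ 3 ^ (n + 2) := by
    induction n with
    | zero => norm_num
    | succ m ih =>
      calc 2 ^ (m + 4) = 2 * 2 ^ (m + 3) := by ring
        _ ≤ 2 * 3 ^ (m + 2) := by omega
        _ ≤ 3 * 3 ^ (m + 2) := by omega
        _ = 3 ^ (m + 3) := by ring
  have : (2 : ℝ) ^ (n + 3) ≤ 3 ^ (n + 2) := by exact_mod_cast hnat
  linarith

theorem stmt_5 (c : ℕ → ℝ) (δ : ℝ) (h0 : c 0 = 0) (h1 : c 1 = δ)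
    (h : ∀ k : ℕ,
      (∑ i ∈ Finset.range (k + 1), ∑ j ∈ Finset.range (i + 1),
          c j * c (i - j) * (k + 1 - i : ℕ) * c (k + 1 - i))
        + c k * (1 - 2 ^ (k + 1) + 3 ^ k : ℝ) = 0) :
    ∀ k : ℕ, 1 ≤ k → c k = (-1) ^ (k - 1) * δ ^ (2 * k - 1) / Nat.factorial k := by
  have main : ∀ k, c k = Gf δ k := by
    intro k
    induction k using Nat.strong_induction_on with
    | _ k IH =>
      match k, IH with
      | 0, _ => simpa [Gf_zero] using h0
      | 1, _ => rw [h1, Gf_succ]; norm_num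
      | (n + 2), IH =>
        have hrec := h (n + 2)
        simp only [show n + 2 + 1 = n + 3 by omega] at hrec
        have hS : ∑ i ∈ range (n + 3), ∑ j ∈ range (i + 1),
            c j * c (i - j) * ((n + 3 - i : ℕ) : ℝ) * c (n + 3 - i)
            = ∑ i ∈ range (n + 3), ∑ j ∈ range (i + 1),
              Gf δ j * Gf δ (i - j) * ((n + 3 - i : ℕ) : ℝ) * Gf δ (n + 3 - i) := by
          apply Finset.sum_congr rfl
          intro i hi
          apply Finset.sum_congr rfl
          intro j hj
          have hi' : i ≤ n + 2 := by simpa [Nat.lt_succ_iff] using hi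
          have hj' : j ≤ i := by simpa [Nat.lt_succ_iff] using hj
          by_cases hj0 : j = 0
          · simp [hj0, h0, Gf_zero]
          by_cases hji : j = i
          · simp [hji, h0, Gf_zero]
          · have h2i : 2 ≤ i := by omega
            rw [IH j (by omega), IH (i - j) (by omega), IH (n + 3 - i) (by omega)]
        rw [hS, sumG δ n] at hrec
        have hc := coef_pos n
        have heq : c (n + 2) * (1 - 2 ^ (n + 3) + 3 ^ (n + 2))
            = Gf δ (n + 2) * (1 - 2 ^ (n + 3) + 3 ^ (n + 2)) := by linarith
        exact mul_right_cancel₀ (ne_of_gt hc) heq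
  intro k hk
  obtain ⟨m, rfl⟩ : ∃ m, k = m + 1 := ⟨k - 1, by omega⟩
  rw [main (m + 1), Gf_succ]
  rw [show m + 1 - 1 = m by omega, show 2 * (m + 1) - 1 = 2 * m + 1 by omega]
  have hp : (-δ ^ 2) ^ m = (-1 : ℝ) ^ m * δ ^ (2 * m) := by rw [neg_pow, pow_mul]
  rw [hp, pow_succ]
  ring
end

section
/- Suppose G is a real-analytic function on a neighborhood of 0 with G(0) = 0, and f is real-analytic at 0 with f(0) > 0. If for all n ≥ 1, Σ_{i=1}^{n} 3^{n-i} f^{(n-i)}(0) G^{(i-1)}(0) = Σ_{i=1}^{n} C(n,i) f^{(n-i)}(0) G^{(i-1)}(0), where G(x) = F(x)f(x) with F' = f, F(0) = 0, then f^{(m)}(0) = (f'(0)/f(0))^{m-1} f'(0) for all m ≥ 1. -/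
open Finset
open scoped ContDiff

private lemma iter_cd {u : ℝ → ℝ} {s : Set ℝ} (hs : IsOpen s)
    (hu : ContDiffOn ℝ ∞ u s) (k : ℕ) : ContDiffOn ℝ ∞ (iteratedDeriv k u) s := by
  induction k with
  | zero => simpa [iteratedDeriv_zero] using hu
  | succ k ih =>
    rw [iteratedDeriv_succ]
    exact ih.deriv_of_isOpen hs (le_of_eq rfl)

private lemma leibniz {u v : ℝ → ℝ} {s : Set ℝ} (hs : IsOpen s)
    (hu : ContDiffOn ℝ ∞ u s) (hv : ContDiffOn ℝ ∞ v s) :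
    ∀ n : ℕ, ∀ x ∈ s, iteratedDeriv n (fun y => u y * v y) x =
      ∑ k ∈ range (n+1), (n.choose k : ℝ) * (iteratedDeriv k u x * iteratedDeriv (n-k) v x) := by
  intro n
  induction n with
  | zero => intro x hx; simp
  | succ n ih =>
    intro x hx
    have hmem : s ∈ nhds x := hs.mem_nhds hx
    have heq : iteratedDeriv n (fun y => u y * v y) =ᶠ[nhds x]
        fun y => ∑ k ∈ range (n+1), (n.choose k : ℝ) *
          (iteratedDeriv k u y * iteratedDeriv (n-k) v y) :=
      Filter.eventuallyEq_of_mem hmem (fun y hy => ih y hy)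
    have hdiff : ∀ k : ℕ, DifferentiableAt ℝ (iteratedDeriv k u) x := fun k =>
      ((iter_cd hs hu k).contDiffAt hmem).differentiableAt (by simp)
    have hdiffv : ∀ k : ℕ, DifferentiableAt ℝ (iteratedDeriv k v) x := fun k =>
      ((iter_cd hs hv k).contDiffAt hmem).differentiableAt (by simp)
    rw [iteratedDeriv_succ, heq.deriv_eq, deriv_fun_sum (A := fun k y => (n.choose k : ℝ) *
          (iteratedDeriv k u y * iteratedDeriv (n-k) v y))
      (fun k _ => (((hdiff k).mul (hdiffv (n-k))).const_mul (n.choose k : ℝ) :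
        DifferentiableAt ℝ (fun y => (n.choose k : ℝ) *
          (iteratedDeriv k u y * iteratedDeriv (n-k) v y)) x))]
    have h1 : ∀ k ∈ range (n+1),
        deriv (fun y => (n.choose k : ℝ) *
          (iteratedDeriv k u y * iteratedDeriv (n-k) v y)) x =
        (n.choose k : ℝ) * (iteratedDeriv (k+1) u x * iteratedDeriv (n-k) v x)
          + (n.choose k : ℝ) * (iteratedDeriv k u x * iteratedDeriv (n+1-k) v x) := by
      intro k hk
      have hk' : k ≤ n := by simpa [Nat.lt_succ_iff] using hk
      rw [deriv_const_mul (d := fun y => iteratedDeriv k u y * iteratedDeriv (n-k) v y) _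
          ((hdiff k).mul (hdiffv (n-k))),
        deriv_fun_mul (hdiff k) (hdiffv (n-k)), ← iteratedDeriv_succ, ← iteratedDeriv_succ,
        show n - k + 1 = n + 1 - k by omega]
      ring
    rw [Finset.sum_congr rfl h1, Finset.sum_add_distrib,
      Finset.sum_choose_succ_mul
        (fun i j => iteratedDeriv i u x * iteratedDeriv j v x) n]
    exact add_comm _ _

private lemma sum_Icc_choose_real (j : ℕ) :
    ∑ k ∈ Icc 1 j, (j.choose k : ℝ) = 2 ^ j - 1 := by
  have h := Nat.sum_range_choose j
  have h2 : ∑ k ∈ range (j + 1), (j.choose k : ℝ) = 2 ^ j := by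
    exact_mod_cast congrArg (Nat.cast : ℕ → ℝ) h
  have h3 : ∑ k ∈ range (j + 1), (j.choose k : ℝ)
      = ∑ k ∈ Icc 1 j, (j.choose k : ℝ) + (j.choose 0 : ℝ) := by
    rw [Finset.sum_range_succ']
    congr 1
    rw [← Finset.Ico_add_one_right_eq_Icc, Finset.sum_Ico_eq_sum_range]
    simp [add_comm]
  rw [h3] at h2
  simp at h2
  linarith

private lemma key_identity (n : ℕ) (hn : 1 ≤ n) :
    ∑ i ∈ Icc 1 n, ((3:ℝ) ^ (n - i) - (n.choose i : ℝ)) * ((2:ℝ) ^ (i-1) - 1) = 0 := by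
  have hIcc : ∀ F : ℕ → ℝ, ∑ i ∈ Icc 1 n, F i = ∑ j ∈ range n, F (1 + j) := by
    intro F
    rw [← Finset.Ico_add_one_right_eq_Icc, Finset.sum_Ico_eq_sum_range]
    simp
  -- four component sums
  have e1 : ∑ j ∈ range n, (3:ℝ) ^ (n - (1+j)) * 2 ^ j = 3 ^ n - 2 ^ n := by
    have := geom_sum₂_mul (2:ℝ) 3 n
    have h2 : ∑ j ∈ range n, (3:ℝ) ^ (n - (1+j)) * 2 ^ j
        = ∑ j ∈ range n, (2:ℝ) ^ j * 3 ^ (n - 1 - j) := by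
      apply Finset.sum_congr rfl
      intro j _
      rw [show n - (1+j) = n - 1 - j by omega, mul_comm]
    rw [h2]
    have h3 : (∑ j ∈ range n, (2:ℝ) ^ j * 3 ^ (n - 1 - j)) * ((2:ℝ) - 3) = 2 ^ n - 3 ^ n := this
    nlinarith [h3]
  have e2 : ∑ j ∈ range n, (3:ℝ) ^ (n - (1+j)) = ((3:ℝ) ^ n - 1) / 2 := by
    have h2 : ∑ j ∈ range n, (3:ℝ) ^ (n - (1+j)) = ∑ j ∈ range n, (3:ℝ) ^ (n - 1 - j) := by
      apply Finset.sum_congr rfl; intro j _; rw [show n - (1+j) = n - 1 - j by omega]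
    rw [h2, Finset.sum_range_reflect (fun j => (3:ℝ) ^ j) n, geom_sum_eq (by norm_num)]
    norm_num
  have e3 : ∑ j ∈ range n, (n.choose (1+j) : ℝ) * 2 ^ j = ((3:ℝ) ^ n - 1) / 2 := by
    have hap := add_pow (2:ℝ) 1 n
    simp only [one_pow, mul_one] at hap
    rw [Finset.sum_range_succ'] at hap
    simp only [pow_zero, Nat.choose_zero_right, Nat.cast_one, one_mul] at hap
    have : (2:ℝ) * ∑ j ∈ range n, (n.choose (1+j) : ℝ) * 2 ^ j
        = ∑ j ∈ range n, (2:ℝ) ^ (j+1) * (n.choose (j+1) : ℝ) := by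
      rw [Finset.mul_sum]
      apply Finset.sum_congr rfl
      intro j _
      rw [add_comm 1 j]; ring
    have h23 : (2:ℝ) + 1 = 3 := by norm_num
    rw [h23] at hap
    nlinarith [hap, this]
  have e4 : ∑ j ∈ range n, (n.choose (1+j) : ℝ) = (2:ℝ) ^ n - 1 := by
    have := sum_Icc_choose_real n
    rw [hIcc (fun i => (n.choose i : ℝ))] at this
    exact this
  rw [hIcc]
  have expand : ∑ j ∈ range n, ((3:ℝ) ^ (n - (1+j)) - (n.choose (1+j) : ℝ))
      * ((2:ℝ) ^ ((1+j)-1) - 1)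
      = (∑ j ∈ range n, (3:ℝ) ^ (n - (1+j)) * 2 ^ j)
        - (∑ j ∈ range n, (3:ℝ) ^ (n - (1+j)))
        - ((∑ j ∈ range n, (n.choose (1+j) : ℝ) * 2 ^ j)
          - (∑ j ∈ range n, (n.choose (1+j) : ℝ))) := by
    rw [← Finset.sum_sub_distrib, ← Finset.sum_sub_distrib, ← Finset.sum_sub_distrib]
    apply Finset.sum_congr rfl
    intro j _
    rw [show (1+j) - 1 = j by omega]
    ring
  rw [expand, e1, e2, e3, e4]
  ring

private lemma choose_lt_pow (m : ℕ) : (m+4).choose 2 < 3 ^ (m+2) := by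
  induction m with
  | zero => norm_num [Nat.choose]
  | succ m ih =>
    have h1 : (m+5).choose 2 = (m+4).choose 2 + (m+4) := by
      rw [show m + 5 = (m+4) + 1 by ring, Nat.choose_succ_succ]
      simp [Nat.choose_one_right, Nat.add_comm]
    have h2 : m + 2 < 3 ^ (m+2) := Nat.lt_pow_self (by norm_num)
    have h3 : 3 ^ (m+3) = 3 * 3 ^ (m+2) := by ring
    have h4 : m+1+4 = m+5 := by omega
    have h5 : m+1+2 = m+3 := by omega
    rw [h4, h5]
    omega

theorem stmt_12 (f F G : ℝ → ℝ)
    (hfa : AnalyticAt ℝ f 0) (hGa : AnalyticAt ℝ G 0)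
    (hf0 : 0 < f 0)
    (hF : ∀ x, HasDerivAt F (f x) x) (hF0 : F 0 = 0)
    (hG : ∀ x, G x = F x * f x)
    (h : ∀ n : ℕ, 1 ≤ n →
      ∑ i ∈ Finset.Icc 1 n,
          (3 : ℝ) ^ (n - i) * iteratedDeriv (n - i) f 0 * iteratedDeriv (i - 1) G 0 =
        ∑ i ∈ Finset.Icc 1 n,
          (n.choose i : ℝ) * iteratedDeriv (n - i) f 0 * iteratedDeriv (i - 1) G 0) :
    ∀ m : ℕ, 1 ≤ m →
      iteratedDeriv m f 0 = (deriv f 0 / f 0) ^ (m - 1) * deriv f 0 := by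
  -- notation
  set a : ℕ → ℝ := fun k => iteratedDeriv k f 0 with ha
  set g : ℕ → ℝ := fun j => iteratedDeriv j G 0 with hg
  have ha0 : a 0 = f 0 := by simp [ha, iteratedDeriv_zero]
  have ha0ne : a 0 ≠ 0 := by rw [ha0]; exact ne_of_gt hf0
  have ha1 : a 1 = deriv f 0 := by simp [ha, iteratedDeriv_one]
  set r : ℝ := a 1 / a 0 with hr
  -- find open set of analyticity
  obtain ⟨t, ht, hta⟩ := hfa.eventually_analyticAt.exists_mem
  obtain ⟨s, hst, hs_open, hs0⟩ := mem_nhds_iff.1 ht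
  have hfs : ContDiffOn ℝ ∞ f s :=
    (fun x hx => (hta x (hst hx)).contDiffAt.contDiffWithinAt)
  have hderivF : deriv F = f := funext fun x => (hF x).deriv
  have hFs : ContDiffOn ℝ ∞ F s := by
    rw [contDiffOn_infty_iff_deriv_of_isOpen hs_open]
    exact ⟨fun x _ => (hF x).differentiableAt.differentiableWithinAt,
      by rw [hderivF]; exact hfs⟩
  -- iterated derivatives of F at 0
  have hFd : ∀ k : ℕ, iteratedDeriv (k+1) F 0 = a k := by
    intro k
    rw [iteratedDeriv_succ', hderivF]
  -- formula for g
  have gval : ∀ j : ℕ, g j = ∑ k ∈ Icc 1 j, (j.choose k : ℝ) * (a (k-1) * a (j-k)) := by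
    intro j
    have hGF : G = fun x => F x * f x := funext hG
    have := leibniz hs_open hFs hfs j 0 hs0
    rw [hg]
    simp only [hGF]
    rw [this, Finset.sum_range_succ']
    have hzero : (j.choose 0 : ℝ) * (iteratedDeriv 0 F 0 * iteratedDeriv (j-0) f 0) = 0 := by
      simp [iteratedDeriv_zero, hF0]
    rw [hzero, add_zero]
    rw [← Finset.Ico_add_one_right_eq_Icc, Finset.sum_Ico_eq_sum_range]
    try simp only [Nat.add_sub_cancel]
    apply Finset.sum_congr rfl
    intro k _
    rw [show 1 + k = k + 1 by omega, hFd k]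
    simp [ha]
  have g0 : g 0 = 0 := by rw [gval]; simp
  have g1 : g 1 = a 0 ^ 2 := by
    rw [gval]
    simp [sq]
  -- the main claim by strong induction
  have Q : ∀ M : ℕ, a M = a 0 * r ^ M := by
    intro M
    induction M using Nat.strong_induction_on with
    | _ M ih =>
      match M with
      | 0 => simp
      | 1 =>
        rw [hr, pow_one]
        field_simp
      | (m+2) =>
        -- use the hypothesis at n = m + 4
        set n : ℕ := m + 4 with hn
        have hsum0 : ∑ i ∈ Icc 1 n,
            ((3:ℝ) ^ (n-i) - (n.choose i : ℝ)) * (a (n-i) * g (i-1)) = 0 := by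
          have := h n (by omega)
          rw [← sub_eq_zero] at this
          rw [← this, ← Finset.sum_sub_distrib]
          apply Finset.sum_congr rfl
          intro i _
          ring
        -- g formula under induction hypothesis, for 1 ≤ j ≤ m+2
        have gIH : ∀ j : ℕ, 1 ≤ j → j ≤ m + 2 →
            g j = a 0 ^ 2 * r ^ (j-1) * (2 ^ j - 1) := by
          intro j hj1 hj2
          rw [gval]
          have : ∀ k ∈ Icc 1 j, (j.choose k : ℝ) * (a (k-1) * a (j-k))
              = (j.choose k : ℝ) * (a 0 ^ 2 * r ^ (j-1)) := by
            intro k hk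
            rw [Finset.mem_Icc] at hk
            rw [ih (k-1) (by omega), ih (j-k) (by omega)]
            rw [show a 0 * r ^ (k-1) * (a 0 * r ^ (j-k)) =
              a 0 ^ 2 * (r ^ (k-1) * r ^ (j-k)) by ring, ← pow_add,
              show k - 1 + (j - k) = j - 1 by omega]
          rw [Finset.sum_congr rfl this, ← Finset.sum_mul, sum_Icc_choose_real]
          ring
        -- decompose the index set
        have hdecomp : Icc 1 n = insert 1 (insert 2 (insert n (Icc 3 (m+3)))) := by
          ext i
          simp only [Finset.mem_Icc, Finset.mem_insert, hn]
          omega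
        have hmem1 : (1:ℕ) ∉ insert 2 (insert n (Icc 3 (m+3))) := by
          simp [hn, Finset.mem_Icc]
        have hmem2 : (2:ℕ) ∉ insert n (Icc 3 (m+3)) := by
          simp [hn, Finset.mem_Icc]
        have hmem3 : n ∉ Icc 3 (m+3) := by
          simp [hn, Finset.mem_Icc]
        -- term values
        have hT1 : ((3:ℝ) ^ (n-1) - (n.choose 1 : ℝ)) * (a (n-1) * g (1-1)) = 0 := by
          simp [g0]
        have hTn : ((3:ℝ) ^ (n-n) - (n.choose n : ℝ)) * (a (n-n) * g (n-1)) = 0 := by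
          simp [Nat.sub_self, Nat.choose_self]
        have hmid : ∑ i ∈ Icc 3 (m+3),
            ((3:ℝ) ^ (n-i) - (n.choose i : ℝ)) * (a (n-i) * g (i-1))
            = (∑ i ∈ Icc 3 (m+3), ((3:ℝ) ^ (n-i) - (n.choose i : ℝ)) * ((2:ℝ) ^ (i-1) - 1))
              * (a 0 ^ 3 * r ^ (m+2)) := by
          rw [Finset.sum_mul]
          apply Finset.sum_congr rfl
          intro i hi
          rw [Finset.mem_Icc] at hi
          rw [ih (n-i) (by omega), gIH (i-1) (by omega) (by omega)]
          rw [show a 0 * r ^ (n-i) * (a 0 ^ 2 * r ^ (i-1-1) * (2 ^ (i-1) - 1)) =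
            (2 ^ (i-1) - 1) * (a 0 ^ 3 * (r ^ (n-i) * r ^ (i-1-1))) by ring, ← pow_add,
            show n - i + (i-1-1) = m + 2 by omega]
          ring
        -- identity decomposition
        have hid := key_identity n (by omega)
        rw [hdecomp, Finset.sum_insert hmem1, Finset.sum_insert hmem2,
          Finset.sum_insert hmem3] at hid hsum0
        have hc1 : ((3:ℝ) ^ (n-1) - (n.choose 1 : ℝ)) * ((2:ℝ) ^ (1-1) - 1) = 0 := by
          norm_num
        have hcn : ((3:ℝ) ^ (n-n) - (n.choose n : ℝ)) * ((2:ℝ) ^ (n-1) - 1) = 0 := by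
          simp [Nat.sub_self, Nat.choose_self]
        rw [hc1, hcn] at hid
        rw [hT1, hTn, hmid] at hsum0
        -- combine
        have hn2 : n - 2 = m + 2 := by omega
        have hc2 : ((2:ℝ) ^ (2-1) - 1) = 1 := by norm_num
        rw [hc2, mul_one] at hid
        -- hid : 0 + (β + Σc) = 0  where β = 3^(n-2) - choose n 2
        -- hsum0 : 0 + (β * (a (n-2) * g 1) + (Σc) * K) = 0
        have hSc : ∑ i ∈ Icc 3 (m+3), ((3:ℝ) ^ (n-i) - (n.choose i : ℝ)) * ((2:ℝ) ^ (i-1) - 1)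
            = -((3:ℝ) ^ (n-2) - (n.choose 2 : ℝ)) := by linarith
        rw [hSc] at hsum0
        have hβpos : (0:ℝ) < (3:ℝ) ^ (n-2) - (n.choose 2 : ℝ) := by
          rw [hn2]
          have := choose_lt_pow m
          have h2 : ((m+4).choose 2 : ℝ) < (3:ℝ) ^ (m+2) := by exact_mod_cast this
          have : (n.choose 2 : ℝ) = ((m+4).choose 2 : ℝ) := by rw [hn]
          linarith
        have hkey : ((3:ℝ) ^ (n-2) - (n.choose 2 : ℝ))
            * (a (n-2) * g 1 - a 0 ^ 3 * r ^ (m+2)) = 0 := by linarith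
        have h5 := (mul_eq_zero.1 hkey).resolve_left (ne_of_gt hβpos)
        rw [sub_eq_zero, hn2, g1] at h5
        -- h5 : a (m+2) * a 0 ^ 2 = a 0 ^ 3 * r ^ (m+2)
        have : a (m+2) * a 0 ^ 2 = (a 0 * r ^ (m+2)) * a 0 ^ 2 := by rw [h5]; ring
        exact mul_right_cancel₀ (pow_ne_zero 2 ha0ne) this
  -- conclude
  intro m hm
  have ham : iteratedDeriv m f 0 = a m := rfl
  have hdf : deriv f 0 / f 0 = r := by rw [hr, ha1, ha0]
  rw [ham, Q m, hdf, ← ha1]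
  have ha1' : a 1 = a 0 * r := by rw [hr]; field_simp
  rw [ha1', show m = (m-1)+1 from by omega, pow_succ]
  simp only [Nat.add_sub_cancel]
  ring
end

section
/- Let f be real-analytic at 0 with f(0) > 0, f'(0) real, and suppose f^{(m)}(0) = (f'(0)/f(0))^{m-1} f'(0) for 1 ≤ m ≤ n-3 (n ≥ 4). With F' = f, F(0) = 0, and G = F·f, one has G^{(j)}(0) = f(0)² (f'(0)/f(0))^{j-1} (2^j - 1) for j = 1, 2, ..., n-2. -/
open Finset

private lemma aux_hasDerivAt {u : ℝ → ℝ} {x : ℝ} (h : ContDiffAt ℝ (⊤:ℕ∞) u x) (m : ℕ) :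
    HasDerivAt (iteratedDeriv m u) (iteratedDeriv (m + 1) u x) x := by
  have h1 : DifferentiableAt ℝ (iteratedDeriv m u) x := by
    have h2 := (h.contDiffWithinAt (s := Set.univ)).differentiableWithinAt_iteratedDerivWithin
      (m := m) (by exact_mod_cast ENat.coe_lt_top m)
      (by rw [Set.insert_eq_of_mem (Set.mem_univ x)]; exact uniqueDiffOn_univ)
    rw [iteratedDerivWithin_univ, differentiableWithinAt_univ] at h2
    exact h2
  have := h1.hasDerivAt
  rwa [← iteratedDeriv_succ] at this

private lemma aux_leibniz {s : Set ℝ} (hs : IsOpen s) {u v : ℝ → ℝ}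
    (hu : ∀ y ∈ s, ContDiffAt ℝ (⊤:ℕ∞) u y) (hv : ∀ y ∈ s, ContDiffAt ℝ (⊤:ℕ∞) v y) :
    ∀ j : ℕ, ∀ x ∈ s, iteratedDeriv j (fun y => u y * v y) x =
      ∑ i ∈ range (j + 1),
        (j.choose i : ℝ) * (iteratedDeriv i u x * iteratedDeriv (j - i) v x) := by
  intro j
  induction j with
  | zero => intro x hx; simp
  | succ j ih =>
    intro x hx
    have hev : (iteratedDeriv j fun y => u y * v y) =ᶠ[nhds x]
        fun y => ∑ i ∈ range (j + 1),
          (j.choose i : ℝ) * (iteratedDeriv i u y * iteratedDeriv (j - i) v y) := by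
      filter_upwards [hs.mem_nhds hx] with y hy using ih y hy
    have hsum : HasDerivAt (fun y => ∑ i ∈ range (j + 1),
        (j.choose i : ℝ) * (iteratedDeriv i u y * iteratedDeriv (j - i) v y))
        (∑ i ∈ range (j + 1), (j.choose i : ℝ) *
          (iteratedDeriv (i + 1) u x * iteratedDeriv (j - i) v x +
            iteratedDeriv i u x * iteratedDeriv (j - i + 1) v x)) x := by
      apply HasDerivAt.fun_sum
      intro i _
      have h1 := aux_hasDerivAt (hu x hx) i
      have h2 := aux_hasDerivAt (hv x hx) (j - i)
      exact (h1.mul h2).const_mul ((j.choose i : ℝ))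
    rw [iteratedDeriv_succ, hev.deriv_eq, hsum.deriv]
    rw [Finset.sum_choose_succ_mul
      (fun a b => iteratedDeriv a u x * iteratedDeriv b v x) j]
    have h3 : (∑ i ∈ range (j + 1), (j.choose i : ℝ) *
        (iteratedDeriv i u x * iteratedDeriv (j + 1 - i) v x)) =
        ∑ i ∈ range (j + 1), (j.choose i : ℝ) *
        (iteratedDeriv i u x * iteratedDeriv (j - i + 1) v x) := by
      refine Finset.sum_congr rfl fun i hi => ?_
      have hij : i ≤ j := Nat.lt_succ_iff.mp (Finset.mem_range.mp hi)
      have he : j + 1 - i = j - i + 1 := by omega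
      rw [he]
    rw [h3, ← Finset.sum_add_distrib]
    apply Finset.sum_congr rfl
    intro i _
    ring

theorem stmt_13 (n : ℕ) (hn : 4 ≤ n) (f F G : ℝ → ℝ)
    (hfa : AnalyticAt ℝ f 0) (hf0 : 0 < f 0)
    (hF : ∀ x, HasDerivAt F (f x) x) (hF0 : F 0 = 0)
    (hG : ∀ x, G x = F x * f x)
    (hder : ∀ m : ℕ, 1 ≤ m → m ≤ n - 3 →
      iteratedDeriv m f 0 = (deriv f 0 / f 0) ^ (m - 1) * deriv f 0) :
    ∀ j : ℕ, 1 ≤ j → j ≤ n - 2 →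
      iteratedDeriv j G 0 =
        f 0 ^ 2 * (deriv f 0 / f 0) ^ (j - 1) * (2 ^ j - 1) := by
  intro j hj1 hj2
  have ha : f 0 ≠ 0 := ne_of_gt hf0
  set a : ℝ := f 0 with ha'
  set r : ℝ := deriv f 0 / a with hr
  have hdf : deriv f 0 = r * a := by rw [hr]; field_simp
  set s : Set ℝ := {y : ℝ | AnalyticAt ℝ f y} with hs'
  have hsopen : IsOpen s := isOpen_analyticAt ℝ f
  have h0s : (0 : ℝ) ∈ s := hfa
  have hfc : ∀ y ∈ s, ContDiffAt ℝ (⊤:ℕ∞) f y := fun y hy => hy.contDiffAt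
  have hFderiv : deriv F = f := funext fun x => (hF x).deriv
  have hFOn : ContDiffOn ℝ (⊤:ℕ∞) F s := by
    rw [contDiffOn_infty_iff_deriv_of_isOpen hsopen]
    refine ⟨fun y _ => (hF y).differentiableAt.differentiableWithinAt, ?_⟩
    rw [hFderiv]
    exact fun y hy => (hfc y hy).contDiffWithinAt
  have hFc : ∀ y ∈ s, ContDiffAt ℝ (⊤:ℕ∞) F y :=
    fun y hy => hFOn.contDiffAt (hsopen.mem_nhds hy)
  have hG' : G = fun y => F y * f y := funext hG
  -- derivative values of f at 0
  have hfd : ∀ m : ℕ, m ≤ n - 3 → iteratedDeriv m f 0 = a * r ^ m := by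
    intro m hm
    match m with
    | 0 => simp [ha']
    | (k + 1) =>
      rw [hder (k + 1) (by omega) hm, hdf]
      simp only [Nat.add_sub_cancel, ← hr]
      ring
  have hFd : ∀ i : ℕ, iteratedDeriv (i + 1) F 0 = iteratedDeriv i f 0 := by
    intro i
    rw [iteratedDeriv_succ', hFderiv]
  rw [hG', aux_leibniz hsopen hFc hfc j 0 h0s]
  rw [Finset.sum_range_succ']
  have hzero : (j.choose 0 : ℝ) *
      (iteratedDeriv 0 F 0 * iteratedDeriv (j - 0) f 0) = 0 := by
    simp [iteratedDeriv_zero, hF0]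
  rw [hzero, add_zero]
  have hterm : ∀ i ∈ range j, (j.choose (i + 1) : ℝ) *
      (iteratedDeriv (i + 1) F 0 * iteratedDeriv (j - (i + 1)) f 0) =
      (j.choose (i + 1) : ℝ) * (a ^ 2 * r ^ (j - 1)) := by
    intro i hi
    have hij : i < j := Finset.mem_range.mp hi
    rw [hFd i, hfd i (by omega), hfd (j - (i + 1)) (by omega)]
    have hpow : r ^ i * r ^ (j - (i + 1)) = r ^ (j - 1) := by
      rw [← pow_add]; congr 1; omega
    calc (j.choose (i + 1) : ℝ) * (a * r ^ i * (a * r ^ (j - (i + 1))))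
        = (j.choose (i + 1) : ℝ) * (a ^ 2 * (r ^ i * r ^ (j - (i + 1)))) := by ring
      _ = (j.choose (i + 1) : ℝ) * (a ^ 2 * r ^ (j - 1)) := by rw [hpow]
  rw [Finset.sum_congr rfl hterm, ← Finset.sum_mul]
  have hchoose : (∑ i ∈ range j, (j.choose (i + 1) : ℝ)) = 2 ^ j - 1 := by
    have h := Nat.sum_range_choose j
    have h2 : (∑ i ∈ range (j + 1), (j.choose i : ℝ)) = 2 ^ j := by
      exact_mod_cast congrArg (Nat.cast : ℕ → ℝ) h
    rw [Finset.sum_range_succ'] at h2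
    simp only [Nat.choose_zero_right, Nat.cast_one] at h2
    linarith
  rw [hchoose]
  ring
end
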